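/- Let A ∈ Matrix (Fin 4) (Fin 4) ℝ be the Hessian of jφ2 at the origin (so A = diag(1,1,−1,−1)), for t ∈ ℝ⁴ let B_t be the Hessian matrix of hφ2_t at the origin (entries (B_t)_{ij} = ∂_i∂_j hφ2_t(0)), and let Ω₀ be the 4×4 matrix with rows (0,1,0,0), (−1,0,0,0), (0,0,0,1), (0,0,−1,0). Then for all t ∈ ℝ⁴ and all c_1, c_2 ∈ ℝ: 390625 · det( Ω₀⁻¹ · (c_1·A + c_2·B_t) ) = f(t,c_1,c_2)², where f(t,c_1,c_2) = 625c_1² + 25c_1c_2(−25 + 50t_1 − 256t_2 − 384t_3 − 192t_4) + 48c_2²( 3t_1² + 320t_2² + 75t_3 + 720t_3² + 75t_4 + 864t_3t_4 + 144t_4² + t_2(50 + 960t_3 + 576t_4) − 50t_1(2t_2 + 3(t_3 + t_4)) ). In particular det( Ω₀⁻¹ (c_1 A + c_2 B_t) ) ≥ 0 for all t, c_1, c_2, so the invariant singular point φ_2(0,0) can never be of hyperbolic-elliptic type. -/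

import Mathlib

open Matrix

/-- `H_t ∘ φ_2` in the chart `φ_2`; coordinates are `p 0 = x`, `p 1 = y`,
`p 2 = u`, `p 3 = v`. -/
noncomputable def hφ2 (t : Fin 4 → ℝ) (p : Fin 4 → ℝ) : ℝ :=
  (1 - 2 * t 0) * ((p 2) ^ 2 + (p 3) ^ 2) / 2 +
  (t 0 / 50) * (p 2 * p 0 - p 3 * p 1) *
    Real.sqrt (2 - (p 0) ^ 2 - (p 1) ^ 2 + 2 * (p 2) ^ 2 + 2 * (p 3) ^ 2) *
    Real.sqrt (8 - (p 0) ^ 2 - (p 1) ^ 2) *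
    Real.sqrt (6 - (p 2) ^ 2 - (p 3) ^ 2) *
    Real.sqrt (6 + (p 0) ^ 2 + (p 1) ^ 2 - 2 * (p 2) ^ 2 - 2 * (p 3) ^ 2) +
  (t 1 / 50) * (2 - (p 0) ^ 2 - (p 1) ^ 2 + 2 * (p 2) ^ 2 + 2 * (p 3) ^ 2) ^ 2 *
    (4 - (p 0) ^ 2 - (p 1) ^ 2 + (p 2) ^ 2 + (p 3) ^ 2) ^ 2 +
  (t 2 / 50) * (2 - (p 0) ^ 2 - (p 1) ^ 2 + 2 * (p 2) ^ 2 + 2 * (p 3) ^ 2) ^ 2 *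
    (6 - (p 2) ^ 2 - (p 3) ^ 2) ^ 2 +
  (t 3 / 100) * (4 - (p 0) ^ 2 - (p 1) ^ 2 + (p 2) ^ 2 + (p 3) ^ 2) ^ 2 *
    (6 - (p 2) ^ 2 - (p 3) ^ 2) ^ 2

/-- The Hessian of `jφ2(x,y,u,v) = (2+x²+y²−u²−v²)/2` at the origin:
`A = diag(1,1,−1,−1)`. -/
noncomputable def Amat : Matrix (Fin 4) (Fin 4) ℝ := Matrix.diagonal ![1, 1, -1, -1]

/-- The Hessian matrix of `hφ2 t` at the origin, `(B_t)_{ij} = ∂_i ∂_j hφ2_t(0)`. -/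
noncomputable def Bmat (t : Fin 4 → ℝ) : Matrix (Fin 4) (Fin 4) ℝ :=
  fun i j => fderiv ℝ (fun p => fderiv ℝ (hφ2 t) p (Pi.single j 1)) 0 (Pi.single i 1)

/-- The matrix of the standard symplectic form `dx∧dy + du∧dv` in the coordinates
`(x,y,u,v)`. -/
noncomputable def Ω₀ : Matrix (Fin 4) (Fin 4) ℝ :=
  !![0, 1, 0, 0; -1, 0, 0, 0; 0, 0, 0, 1; 0, 0, -1, 0]

/-!
All summands of `hφ2 t` are built from `x² + y²`, `u² + v²` and `ux − vy`, which are critical at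
the origin; the square-root product only multiplies `ux − vy`, which also vanishes there. On
functions critical at a point the Hessian is a derivation over evaluation at that point, so `B_t`
is read off from the Hessians of these three quadratics and the values `2, 4, 6` and `24` of the
remaining factors at `0`. Like `A`, it is the Hessian of a circle-invariant quadratic form, hence so
is `c₁A + c₂B_t`, whose determinant is then the square `(ae − b²)²`; and `det Ω₀ = 1`.
-/

open Filter Topology

section SecondDerivative

variable {E F : Type*} [NormedAddCommGroup E] [NormedSpace ℝ E] [NormedAddCommGroup F]
  [NormedSpace ℝ F] {f : E → F} {x : E}

lemma ContDiffAt.eventually_differentiableAt (hf : ContDiffAt ℝ 2 f x) :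
    ∀ᶠ p in 𝓝 x, DifferentiableAt ℝ f p := by
  filter_upwards [hf.eventually (by decide)] with p hp using hp.differentiableAt (by norm_num)

lemma ContDiffAt.differentiableAt_fderiv_apply (hf : ContDiffAt ℝ 2 f x) (v : E) :
    DifferentiableAt ℝ (fun p => fderiv ℝ f p v) x :=
  ((hf.fderiv_right (m := 1) (by norm_num)).differentiableAt (by norm_num)).clm_apply
    (differentiableAt_const v)

end SecondDerivative

section Hessian

variable {ι : Type*} {f g : (ι → ℝ) → ℝ} {x : ι → ℝ}

variable [DecidableEq ι]

noncomputable def hessianAt (f : (ι → ℝ) → ℝ) (x : ι → ℝ) : Matrix ι ι ℝ :=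
  of fun i j => fderiv ℝ (fun p => fderiv ℝ f p (Pi.single j 1)) x (Pi.single i 1)

noncomputable def gradientAt (f : (ι → ℝ) → ℝ) (x : ι → ℝ) : ι → ℝ :=
  fun i => fderiv ℝ f x (Pi.single i 1)

lemma hessianAt_const (c : ℝ) : hessianAt (fun _ => c) x = 0 := by
  ext i j
  simp [hessianAt]

lemma hessianAt_continuousLinearMap (L : (ι → ℝ) →L[ℝ] ℝ) : hessianAt L x = 0 := by
  ext i j
  simp [hessianAt, L.fderiv]

lemma gradientAt_apply_self (k : ι) : gradientAt (fun p => p k) x = Pi.single k 1 := by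
  ext i
  rw [gradientAt, show (fun p : ι → ℝ => p k) = ContinuousLinearMap.proj (R := ℝ) k from rfl,
    ContinuousLinearMap.fderiv]
  simp [Pi.single_apply, eq_comm]

variable [Fintype ι]

lemma hessianAt_add (hf : ContDiffAt ℝ 2 f x) (hg : ContDiffAt ℝ 2 g x) :
    hessianAt (fun p => f p + g p) x = hessianAt f x + hessianAt g x := by
  ext i j
  have hev : (fun p => fderiv ℝ (fun q => f q + g q) p (Pi.single j 1)) =ᶠ[𝓝 x]
      fun p => fderiv ℝ f p (Pi.single j 1) + fderiv ℝ g p (Pi.single j 1) := by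
    filter_upwards [hf.eventually_differentiableAt, hg.eventually_differentiableAt]
      with p hfp hgp
    rw [fderiv_fun_add hfp hgp, _root_.add_apply]
  rw [Matrix.add_apply, hessianAt, of_apply, hev.fderiv_eq,
    fderiv_fun_add (hf.differentiableAt_fderiv_apply _) (hg.differentiableAt_fderiv_apply _)]
  rfl

lemma hessianAt_mul (hf : ContDiffAt ℝ 2 f x) (hg : ContDiffAt ℝ 2 g x) :
    hessianAt (fun p => f p * g p) x = g x • hessianAt f x + f x • hessianAt g x +
      vecMulVec (gradientAt f x) (gradientAt g x) + vecMulVec (gradientAt g x) (gradientAt f x) := by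
  ext i j
  have hev : (fun p => fderiv ℝ (fun q => f q * g q) p (Pi.single j 1)) =ᶠ[𝓝 x]
      fun p => f p * fderiv ℝ g p (Pi.single j 1) + g p * fderiv ℝ f p (Pi.single j 1) := by
    filter_upwards [hf.eventually_differentiableAt, hg.eventually_differentiableAt]
      with p hfp hgp
    rw [fderiv_fun_mul hfp hgp]
    rfl
  have hf' := hf.differentiableAt (by norm_num)
  have hg' := hg.differentiableAt (by norm_num)
  rw [hessianAt, of_apply, hev.fderiv_eq,
    fderiv_fun_add (hf'.fun_mul (hg.differentiableAt_fderiv_apply _))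
      (hg'.fun_mul (hf.differentiableAt_fderiv_apply _)),
    fderiv_fun_mul hf' (hg.differentiableAt_fderiv_apply _),
    fderiv_fun_mul hg' (hf.differentiableAt_fderiv_apply _)]
  simp only [Matrix.add_apply, Matrix.smul_apply, vecMulVec_apply, hessianAt, gradientAt, of_apply,
    _root_.add_apply, _root_.smul_apply, smul_eq_mul]
  ring

lemma hessianAt_coord_mul_coord (k l : ι) :
    hessianAt (fun p => p k * p l) x = single k l 1 + single l k 1 := by
  have hcoord : ∀ m : ι, ContDiffAt ℝ 2 (fun p : ι → ℝ => p m) x :=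
    fun m => (contDiff_apply ℝ ℝ m).contDiffAt
  have hlin : ∀ m : ι, hessianAt (fun p : ι → ℝ => p m) x = 0 :=
    fun m => hessianAt_continuousLinearMap (ContinuousLinearMap.proj m)
  rw [hessianAt_mul (hcoord k) (hcoord l), hlin, hlin, gradientAt_apply_self,
    gradientAt_apply_self, single_eq_single_vecMulVec_single,
    single_eq_single_vecMulVec_single]
  simp

structure HasCriticalHessianAt (f : (ι → ℝ) → ℝ) (H : Matrix ι ι ℝ) (x : ι → ℝ) : Prop where
  contDiffAt : ContDiffAt ℝ 2 f x
  fderiv_eq_zero : fderiv ℝ f x = 0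
  hessianAt_eq : hessianAt f x = H

namespace HasCriticalHessianAt

variable {H G : Matrix ι ι ℝ}

lemma gradientAt_eq_zero (hf : HasCriticalHessianAt f H x) : gradientAt f x = 0 := by
  ext i
  simp [gradientAt, hf.fderiv_eq_zero]

lemma const (c : ℝ) : HasCriticalHessianAt (fun _ => c) 0 x :=
  ⟨contDiffAt_const, fderiv_const_apply c, hessianAt_const c⟩

lemma add (hf : HasCriticalHessianAt f H x) (hg : HasCriticalHessianAt g G x) :
    HasCriticalHessianAt (fun p => f p + g p) (H + G) x where
  contDiffAt := hf.contDiffAt.add hg.contDiffAt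
  fderiv_eq_zero := by
    rw [fderiv_fun_add (hf.contDiffAt.differentiableAt (by norm_num))
      (hg.contDiffAt.differentiableAt (by norm_num)), hf.fderiv_eq_zero, hg.fderiv_eq_zero,
      add_zero]
  hessianAt_eq := by rw [hessianAt_add hf.contDiffAt hg.contDiffAt, hf.hessianAt_eq, hg.hessianAt_eq]

lemma mul (hf : HasCriticalHessianAt f H x) (hg : HasCriticalHessianAt g G x) :
    HasCriticalHessianAt (fun p => f p * g p) (g x • H + f x • G) x where
  contDiffAt := hf.contDiffAt.mul hg.contDiffAt
  fderiv_eq_zero := by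
    rw [fderiv_fun_mul (hf.contDiffAt.differentiableAt (by norm_num))
      (hg.contDiffAt.differentiableAt (by norm_num)), hf.fderiv_eq_zero, hg.fderiv_eq_zero]
    simp
  hessianAt_eq := by
    rw [hessianAt_mul hf.contDiffAt hg.contDiffAt, hf.hessianAt_eq, hg.hessianAt_eq,
      hf.gradientAt_eq_zero, hg.gradientAt_eq_zero]
    simp

lemma mul_of_eq_zero (hf : HasCriticalHessianAt f H x) (hf0 : f x = 0)
    (hg : ContDiffAt ℝ 2 g x) : HasCriticalHessianAt (fun p => f p * g p) (g x • H) x where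
  contDiffAt := hf.contDiffAt.mul hg
  fderiv_eq_zero := by
    rw [fderiv_fun_mul (hf.contDiffAt.differentiableAt (by norm_num))
      (hg.differentiableAt (by norm_num)), hf.fderiv_eq_zero, hf0]
    simp
  hessianAt_eq := by
    rw [hessianAt_mul hf.contDiffAt hg, hf.hessianAt_eq, hf.gradientAt_eq_zero, hf0]
    simp

lemma const_mul (hf : HasCriticalHessianAt f H x) (c : ℝ) :
    HasCriticalHessianAt (fun p => c * f p) (c • H) x := by
  simpa using (const c).mul hf

lemma sq (hf : HasCriticalHessianAt f H x) :
    HasCriticalHessianAt (fun p => f p ^ 2) ((2 * f x) • H) x := by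
  have h := hf.mul hf
  rw [← add_smul, ← two_mul] at h
  simpa only [← pow_two] using h

end HasCriticalHessianAt

lemma hasCriticalHessianAt_coord_mul_coord (k l : ι) :
    HasCriticalHessianAt (fun p => p k * p l) (single k l 1 + single l k 1) 0 where
  contDiffAt := ((contDiff_apply ℝ ℝ k).mul (contDiff_apply ℝ ℝ l)).contDiffAt
  fderiv_eq_zero := by
    rw [fderiv_fun_mul (differentiableAt_apply k 0) (differentiableAt_apply l 0)]
    simp
  hessianAt_eq := hessianAt_coord_mul_coord k l

end Hessian

section CircleInvariant

variable {R : Type*} [CommRing R]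

/-- The Hessian of `(a(x² + y²) + e(u² + v²))/2 + b(ux − vy)`; these are the quadratic forms
invariant under `(x + iy, u + iv) ↦ (e^{iθ}(x + iy), e^{−iθ}(u + iv))`. -/
def circleInvariantMatrix (a b e : R) : Matrix (Fin 4) (Fin 4) R :=
  !![a, 0, b, 0; 0, a, 0, -b; b, 0, e, 0; 0, -b, 0, e]

lemma smul_circleInvariantMatrix (c a b e : R) :
    c • circleInvariantMatrix a b e = circleInvariantMatrix (c * a) (c * b) (c * e) := by
  ext i j
  fin_cases i <;> fin_cases j <;> simp [circleInvariantMatrix]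

lemma circleInvariantMatrix_add_circleInvariantMatrix (a b e a' b' e' : R) :
    circleInvariantMatrix a b e + circleInvariantMatrix a' b' e' =
      circleInvariantMatrix (a + a') (b + b') (e + e') := by
  ext i j
  fin_cases i <;> fin_cases j <;> simp [circleInvariantMatrix] <;> ring

lemma det_circleInvariantMatrix (a b e : R) :
    (circleInvariantMatrix a b e).det = (a * e - b ^ 2) ^ 2 := by
  rw [circleInvariantMatrix, det_succ_row_zero]
  simp [Fin.sum_univ_succ, det_fin_three, Fin.succAbove]
  ring

end CircleInvariant

lemma Amat_eq : Amat = circleInvariantMatrix 1 0 (-1) := by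
  ext i j
  fin_cases i <;> fin_cases j <;> simp [Amat, circleInvariantMatrix]

lemma det_Ω₀ : Ω₀.det = 1 := by
  rw [Ω₀, det_succ_row_zero]
  simp [Fin.sum_univ_succ, det_fin_three, Fin.succAbove]

lemma det_Ω₀_inv_mul (M : Matrix (Fin 4) (Fin 4) ℝ) : (Ω₀⁻¹ * M).det = M.det := by
  rw [det_mul, det_nonsing_inv, det_Ω₀, Ring.inverse_one, one_mul]

def radialQuadratic (a b c : ℝ) (p : Fin 4 → ℝ) : ℝ :=
  a + b * (p 0 * p 0 + p 1 * p 1) + c * (p 2 * p 2 + p 3 * p 3)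

lemma radialQuadratic_zero (a b c : ℝ) : radialQuadratic a b c 0 = a := by
  simp [radialQuadratic]

lemma hasCriticalHessianAt_radialQuadratic (a b c : ℝ) :
    HasCriticalHessianAt (radialQuadratic a b c) (circleInvariantMatrix (2 * b) 0 (2 * c)) 0 := by
  have h := ((HasCriticalHessianAt.const a).add
    (((hasCriticalHessianAt_coord_mul_coord (0 : Fin 4) 0).add
      (hasCriticalHessianAt_coord_mul_coord 1 1)).const_mul b)).add
    (((hasCriticalHessianAt_coord_mul_coord 2 2).add
      (hasCriticalHessianAt_coord_mul_coord 3 3)).const_mul c)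
  convert h using 2
  · rfl
  · ext i j
    fin_cases i <;> fin_cases j <;> simp [circleInvariantMatrix, single] <;> ring

lemma hasCriticalHessianAt_twistedPairing :
    HasCriticalHessianAt (fun p : Fin 4 → ℝ => p 2 * p 0 - p 3 * p 1)
      (circleInvariantMatrix 0 1 0) 0 := by
  have h := (hasCriticalHessianAt_coord_mul_coord (2 : Fin 4) 0).add
    ((hasCriticalHessianAt_coord_mul_coord (3 : Fin 4) 1).const_mul (-1))
  convert h using 2
  · ring
  · ext i j
    fin_cases i <;> fin_cases j <;> simp [circleInvariantMatrix, single]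

noncomputable def radicalProduct (p : Fin 4 → ℝ) : ℝ :=
  Real.sqrt (2 - (p 0) ^ 2 - (p 1) ^ 2 + 2 * (p 2) ^ 2 + 2 * (p 3) ^ 2) *
  Real.sqrt (8 - (p 0) ^ 2 - (p 1) ^ 2) *
  Real.sqrt (6 - (p 2) ^ 2 - (p 3) ^ 2) *
  Real.sqrt (6 + (p 0) ^ 2 + (p 1) ^ 2 - 2 * (p 2) ^ 2 - 2 * (p 3) ^ 2)

lemma radicalProduct_zero : radicalProduct 0 = 24 := by
  have h : √2 * √8 * √6 * √6 = √(2 * 8 * 6 * 6) := by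
    rw [Real.sqrt_mul, Real.sqrt_mul, Real.sqrt_mul] <;> norm_num
  rw [show (2 * 8 * 6 * 6 : ℝ) = 24 ^ 2 by norm_num, Real.sqrt_sq (by norm_num)] at h
  simpa [radicalProduct] using h

lemma contDiffAt_radicalProduct : ContDiffAt ℝ 2 radicalProduct 0 := by
  unfold radicalProduct
  refine ((((ContDiffAt.sqrt ?_ ?_).mul (ContDiffAt.sqrt ?_ ?_)).mul
    (ContDiffAt.sqrt ?_ ?_)).mul (ContDiffAt.sqrt ?_ ?_)) <;> first | fun_prop | norm_num

lemma hφ2_eq (t : Fin 4 → ℝ) : hφ2 t = fun p =>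
    (1 - 2 * t 0) / 2 * radialQuadratic 0 0 1 p +
    t 0 / 50 * ((p 2 * p 0 - p 3 * p 1) * radicalProduct p) +
    t 1 / 50 * (radialQuadratic 2 (-1) 2 p ^ 2 * radialQuadratic 4 (-1) 1 p ^ 2) +
    t 2 / 50 * (radialQuadratic 2 (-1) 2 p ^ 2 * radialQuadratic 6 0 (-1) p ^ 2) +
    t 3 / 100 * (radialQuadratic 4 (-1) 1 p ^ 2 * radialQuadratic 6 0 (-1) p ^ 2) := by
  ext p
  simp only [hφ2, radialQuadratic, radicalProduct]
  ring

lemma hasCriticalHessianAt_hφ2 (t : Fin 4 → ℝ) :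
    HasCriticalHessianAt (hφ2 t) (circleInvariantMatrix
      (-(96 * t 1 + 144 * t 2 + 144 * t 3) / 25) (12 * t 0 / 25)
      (1 - 2 * t 0 + (160 * t 1 + 240 * t 2 + 48 * t 3) / 25)) 0 := by
  have hK := hasCriticalHessianAt_radialQuadratic 2 (-1) 2
  have hL := hasCriticalHessianAt_radialQuadratic 4 (-1) 1
  have hM := hasCriticalHessianAt_radialQuadratic 6 0 (-1)
  have h := (((((hasCriticalHessianAt_radialQuadratic 0 0 1).const_mul ((1 - 2 * t 0) / 2)).add
    ((hasCriticalHessianAt_twistedPairing.mul_of_eq_zero (by simp)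
      contDiffAt_radicalProduct).const_mul (t 0 / 50))).add
    ((hK.sq.mul hL.sq).const_mul (t 1 / 50))).add
    ((hK.sq.mul hM.sq).const_mul (t 2 / 50))).add
    ((hL.sq.mul hM.sq).const_mul (t 3 / 100))
  rw [hφ2_eq]
  convert h using 2
  simp only [radialQuadratic_zero, radicalProduct_zero, smul_circleInvariantMatrix,
    circleInvariantMatrix_add_circleInvariantMatrix]
  congr 1 <;> ring

lemma Bmat_eq_circleInvariantMatrix (t : Fin 4 → ℝ) :
    Bmat t = circleInvariantMatrix (-(96 * t 1 + 144 * t 2 + 144 * t 3) / 25) (12 * t 0 / 25)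
      (1 - 2 * t 0 + (160 * t 1 + 240 * t 2 + 48 * t 3) / 25) :=
  (hasCriticalHessianAt_hφ2 t).hessianAt_eq

/-- `390625 · det(Ω₀⁻¹ (c₁A + c₂B_t))` is the perfect square `f(t,c₁,c₂)²`; in
particular the determinant is always nonnegative, so the invariant singular point
`φ_2(0,0)` can never be of hyperbolic-elliptic type. -/
theorem det_at_invariant_point_is_square :
    ∀ (t : Fin 4 → ℝ) (c₁ c₂ : ℝ),
      390625 * (Ω₀⁻¹ * (c₁ • Amat + c₂ • Bmat t)).det =
        (625 * c₁ ^ 2 +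
          25 * c₁ * c₂ * (-25 + 50 * t 0 - 256 * t 1 - 384 * t 2 - 192 * t 3) +
          48 * c₂ ^ 2 *
            (3 * (t 0) ^ 2 + 320 * (t 1) ^ 2 + 75 * t 2 + 720 * (t 2) ^ 2 +
              75 * t 3 + 864 * t 2 * t 3 + 144 * (t 3) ^ 2 +
              t 1 * (50 + 960 * t 2 + 576 * t 3) -
              50 * t 0 * (2 * t 1 + 3 * (t 2 + t 3)))) ^ 2 ∧
      0 ≤ (Ω₀⁻¹ * (c₁ • Amat + c₂ • Bmat t)).det := by
  intro t c₁ c₂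
  rw [det_Ω₀_inv_mul, Amat_eq, Bmat_eq_circleInvariantMatrix, smul_circleInvariantMatrix,
    smul_circleInvariantMatrix, circleInvariantMatrix_add_circleInvariantMatrix,
    det_circleInvariantMatrix]
  exact ⟨by ring, sq_nonneg _⟩
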